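/- arXiv:1806.09311 — 2 statements merged into one kernel-verified Lean document; each statement's English description precedes it below -/
import Mathlib

section
/- Lemma 3.2(i) (coercivity of the real part of the modal PML form): Assume σ₀ ≥ √3. If ν ∈ ℝ satisfies ν² ≥ k²R² + λ k R̂², then for every admissible v, Re a_ν(v,v) ≥ ∫₀^{R̂} ( (1/(1+σ₀²)) r |v′(r)|² + λ k r |v(r)|² ) dr. -/
open MeasureTheory

noncomputable section

/-- The PML medium property `σ(r)`: `0` for `0 ≤ r ≤ R` and `σ₀` for `r > R`. -/
def sigPML (σ₀ R r : ℝ) : ℝ := if r ≤ R then 0 else σ₀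

/-- `δ(r) = 0` for `0 ≤ r ≤ R` and `δ(r) = σ₀(r−R)/r` for `r > R`. -/
def delPML (σ₀ R r : ℝ) : ℝ := if r ≤ R then 0 else σ₀ * (r - R) / r

/-- `α(r) = 1 + iσ(r)`. -/
def alphaPML (σ₀ R r : ℝ) : ℂ := 1 + Complex.I * sigPML σ₀ R r

/-- `β(r) = 1 + iδ(r)`. -/
def betaPML (σ₀ R r : ℝ) : ℂ := 1 + Complex.I * delPML σ₀ R r

/-- `λ = R^{3/2} / (3 σ₀ R̂² L^{1/2})` with `L = R̂ − R`. -/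
def lamPML (σ₀ R Rh : ℝ) : ℝ := R ^ ((3 : ℝ) / 2) / (3 * σ₀ * Rh ^ 2 * (Rh - R) ^ ((1 : ℝ) / 2))

/-- A function `v : (0, R̂] → ℂ` is admissible if it is locally absolutely continuous with
derivative `v′` and the integrals `∫₀^{R̂} r|v′|²`, `∫₀^{R̂} (1/r)|v|²`, `∫₀^{R̂} r|v|²` are
all finite. -/
def Admissible (Rh : ℝ) (v v' : ℝ → ℂ) : Prop :=
  AEStronglyMeasurable v' (volume.restrict (Set.Ioc 0 Rh)) ∧
  (∀ a b : ℝ, 0 < a → a ≤ b → b ≤ Rh → v b - v a = ∫ t in a..b, v' t) ∧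
  IntegrableOn (fun r => r * ‖v' r‖ ^ 2) (Set.Ioc 0 Rh) ∧
  IntegrableOn (fun r => ‖v r‖ ^ 2 / r) (Set.Ioc 0 Rh) ∧
  IntegrableOn (fun r => r * ‖v r‖ ^ 2) (Set.Ioc 0 Rh)

/-- The modal PML sesquilinear form evaluated at `(v, v)`:
`a_ν(v,v) = ∫₀^{R̂} ((β/α) r |v′|² + ((ν²/r)(α/β) − k²αβr) |v|²) dr`. -/
def aForm (k σ₀ R Rh ν : ℝ) (v v' : ℝ → ℂ) : ℂ :=
  ∫ r in Set.Ioc 0 Rh,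
    ((betaPML σ₀ R r / alphaPML σ₀ R r) * (r : ℂ) * (‖v' r‖ ^ 2 : ℝ) +
      (((ν ^ 2 : ℝ) / r) * (alphaPML σ₀ R r / betaPML σ₀ R r) -
        (k ^ 2 : ℝ) * alphaPML σ₀ R r * betaPML σ₀ R r * r) * (‖v r‖ ^ 2 : ℝ))

/-! For `r ≤ R` the form is the undamped one, and `ν² ≥ k²R² + λkR̂²` makes the zeroth-order
coefficient `ν²/r − k²r` at least `λkr`. In the layer the real part of `β/α` is
`(1 + σ₀δ)/(1 + σ₀²) ≥ 1/(1 + σ₀²)`, the real part of `α/β` is at least `1`, and the loss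
`k²r²(1 − σ₀δ)` in the real part of `k²αβr²` stays below `k²R²` as soon as `σ₀² ≥ 3`.
Integrating these pointwise bounds, which is legitimate because every coefficient of the form
is bounded, gives the claim. -/

section Coefficients

variable {σ₀ R r : ℝ}

lemma sigPML_nonneg (hσ₀ : 0 ≤ σ₀) : 0 ≤ sigPML σ₀ R r := by
  unfold sigPML; split_ifs <;> simp [hσ₀]

lemma sigPML_le (hσ₀ : 0 ≤ σ₀) : sigPML σ₀ R r ≤ σ₀ := by
  unfold sigPML; split_ifs <;> simp [hσ₀]

lemma delPML_nonneg (hσ₀ : 0 ≤ σ₀) (hR : 0 ≤ R) : 0 ≤ delPML σ₀ R r := by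
  unfold delPML
  split_ifs with hrR
  · rfl
  · have hr : 0 < r := hR.trans_lt (not_le.mp hrR)
    exact div_nonneg (mul_nonneg hσ₀ (by linarith)) hr.le

lemma delPML_le (hσ₀ : 0 ≤ σ₀) (hR : 0 ≤ R) : delPML σ₀ R r ≤ σ₀ := by
  unfold delPML
  split_ifs with hrR
  · exact hσ₀
  · have hr : 0 < r := hR.trans_lt (not_le.mp hrR)
    rw [div_le_iff₀ hr]
    nlinarith

lemma one_le_div_one_add_delPML_sq (hσ₀ : 0 ≤ σ₀) (hR : 0 ≤ R) :
    1 ≤ (1 + sigPML σ₀ R r * delPML σ₀ R r) / (1 + delPML σ₀ R r ^ 2) := by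
  by_cases hrR : r ≤ R
  · simp [sigPML, delPML, hrR]
  · have hd := delPML_nonneg (r := r) hσ₀ hR
    have hdσ := delPML_le (r := r) hσ₀ hR
    rw [show sigPML σ₀ R r = σ₀ from if_neg hrR, one_le_div (by positivity)]
    nlinarith

/-- In the layer `r²(1 − σ₀δ) − R² = (r − R)(r + R − σ₀²r)`, and `σ₀² ≥ 3 > 1 + R/r`. -/
lemma sq_mul_one_sub_sigPML_mul_delPML_le (hσ₀ : 3 ≤ σ₀ ^ 2) (hr : 0 < r) :
    r ^ 2 * (1 - sigPML σ₀ R r * delPML σ₀ R r) ≤ R ^ 2 := by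
  by_cases hrR : r ≤ R
  · simp only [sigPML, delPML, if_pos hrR]
    nlinarith
  · have hRr : R < r := not_le.mp hrR
    have hexpand : r ^ 2 * (1 - σ₀ * (σ₀ * (r - R) / r)) = r ^ 2 - σ₀ ^ 2 * r * (r - R) := by
      field_simp
    simp only [sigPML, delPML, if_neg hrR, hexpand]
    nlinarith [mul_nonneg (sub_nonneg.mpr hRr.le) (mul_nonneg (sub_nonneg.mpr hσ₀) hr.le)]

lemma lamPML_nonneg {Rh : ℝ} (hσ₀ : 0 ≤ σ₀) (hR : 0 ≤ R) : 0 ≤ lamPML σ₀ R Rh := by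
  unfold lamPML
  rw [← Real.sqrt_eq_rpow]
  positivity

lemma measurable_sigPML (σ₀ R : ℝ) : Measurable (sigPML σ₀ R) :=
  Measurable.ite measurableSet_Iic measurable_const measurable_const

lemma measurable_delPML (σ₀ R : ℝ) : Measurable (delPML σ₀ R) :=
  Measurable.ite measurableSet_Iic measurable_const
    ((measurable_const.mul (measurable_id.sub measurable_const)).div measurable_id)

lemma measurable_alphaPML (σ₀ R : ℝ) : Measurable (alphaPML σ₀ R) :=
  measurable_const.add
    (measurable_const.mul (Complex.measurable_ofReal.comp (measurable_sigPML σ₀ R)))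

lemma measurable_betaPML (σ₀ R : ℝ) : Measurable (betaPML σ₀ R) :=
  measurable_const.add
    (measurable_const.mul (Complex.measurable_ofReal.comp (measurable_delPML σ₀ R)))

lemma one_le_norm_one_add_I_mul (x : ℝ) : 1 ≤ ‖1 + Complex.I * x‖ := by
  simpa using Complex.abs_re_le_norm (1 + Complex.I * x)

lemma norm_one_add_I_mul_le (x : ℝ) : ‖1 + Complex.I * x‖ ≤ 1 + |x| :=
  (norm_add_le _ _).trans (by simp)

lemma norm_alphaPML_le (hσ₀ : 0 ≤ σ₀) : ‖alphaPML σ₀ R r‖ ≤ 1 + σ₀ := by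
  refine (norm_one_add_I_mul_le _).trans ?_
  rw [abs_of_nonneg (sigPML_nonneg hσ₀)]
  linarith [sigPML_le (R := R) (r := r) hσ₀]

lemma norm_betaPML_le (hσ₀ : 0 ≤ σ₀) (hR : 0 ≤ R) : ‖betaPML σ₀ R r‖ ≤ 1 + σ₀ := by
  refine (norm_one_add_I_mul_le _).trans ?_
  rw [abs_of_nonneg (delPML_nonneg hσ₀ hR)]
  linarith [delPML_le (r := r) hσ₀ hR]

end Coefficients

lemma one_div_one_add_sq_le_div {s d σ : ℝ} (hs : 0 ≤ s) (hsσ : s ≤ σ) (hd : 0 ≤ d) :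
    1 / (1 + σ ^ 2) ≤ (1 + s * d) / (1 + s ^ 2) :=
  div_le_div₀ (by positivity) (by nlinarith) (by positivity) (by nlinarith)

lemma mul_le_div_mul_sub_of_sq_mul_le {μ k ν R Rh r q t : ℝ} (hμ : 0 ≤ μ) (hr : 0 < r)
    (hrRh : r ≤ Rh) (hq : 1 ≤ q) (ht : r ^ 2 * (1 - t) ≤ R ^ 2)
    (hν : k ^ 2 * R ^ 2 + μ * Rh ^ 2 ≤ ν ^ 2) :
    μ * r ≤ ν ^ 2 / r * q - k ^ 2 * r * (1 - t) := by
  have hμr : μ * r ^ 2 ≤ μ * Rh ^ 2 := mul_le_mul_of_nonneg_left (by gcongr) hμ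
  have hkt : k ^ 2 * (r ^ 2 * (1 - t)) ≤ k ^ 2 * R ^ 2 := mul_le_mul_of_nonneg_left ht (sq_nonneg k)
  have hνq : ν ^ 2 ≤ ν ^ 2 * q := le_mul_of_one_le_right (sq_nonneg ν) hq
  rw [div_mul_eq_mul_div, le_sub_iff_add_le, le_div_iff₀ hr]
  linear_combination hμr + hkt + hν + hνq

def pmlDensity (k σ₀ R ν r p q : ℝ) : ℂ :=
  (betaPML σ₀ R r / alphaPML σ₀ R r) * (r : ℂ) * (p : ℂ) +
    (((ν ^ 2 : ℝ) / r) * (alphaPML σ₀ R r / betaPML σ₀ R r) -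
      (k ^ 2 : ℝ) * alphaPML σ₀ R r * betaPML σ₀ R r * r) * (q : ℂ)

section Density

variable {k σ₀ R Rh ν : ℝ}

lemma aForm_eq_integral_pmlDensity (v v' : ℝ → ℂ) :
    aForm k σ₀ R Rh ν v v' =
      ∫ r in Set.Ioc 0 Rh, pmlDensity k σ₀ R ν r (‖v' r‖ ^ 2) (‖v r‖ ^ 2) :=
  rfl

lemma re_pmlDensity (r p q : ℝ) :
    (pmlDensity k σ₀ R ν r p q).re =
      (1 + sigPML σ₀ R r * delPML σ₀ R r) / (1 + sigPML σ₀ R r ^ 2) * r * p +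
        (ν ^ 2 / r * ((1 + sigPML σ₀ R r * delPML σ₀ R r) / (1 + delPML σ₀ R r ^ 2)) -
          k ^ 2 * r * (1 - sigPML σ₀ R r * delPML σ₀ R r)) * q := by
  rw [pmlDensity, ← Complex.ofReal_div]
  simp only [alphaPML, betaPML, pow_two, Complex.div_re, Complex.div_im,
    Complex.normSq_apply, Complex.add_re, Complex.mul_re, Complex.add_im, Complex.mul_im,
    Complex.sub_re, Complex.ofReal_re, Complex.ofReal_im, Complex.I_re, Complex.I_im,
    Complex.one_re, Complex.one_im]
  ring_nf

lemma le_re_pmlDensity {r p q : ℝ} (hk : 0 ≤ k) (hσ₀ : Real.sqrt 3 ≤ σ₀) (hR : 0 ≤ R)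
    (hν : k ^ 2 * R ^ 2 + lamPML σ₀ R Rh * k * Rh ^ 2 ≤ ν ^ 2) (hr : r ∈ Set.Ioc 0 Rh)
    (hp : 0 ≤ p) (hq : 0 ≤ q) :
    1 / (1 + σ₀ ^ 2) * r * p + lamPML σ₀ R Rh * k * (r * q) ≤
      (pmlDensity k σ₀ R ν r p q).re := by
  have hσ₀_nonneg : 0 ≤ σ₀ := (Real.sqrt_nonneg 3).trans hσ₀
  have hσ₀_sq : 3 ≤ σ₀ ^ 2 := by
    simpa using pow_le_pow_left₀ (Real.sqrt_nonneg 3) hσ₀ 2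
  have hA := one_div_one_add_sq_le_div (sigPML_nonneg (R := R) (r := r) hσ₀_nonneg) (sigPML_le hσ₀_nonneg)
    (delPML_nonneg (r := r) hσ₀_nonneg hR)
  have hB := mul_le_div_mul_sub_of_sq_mul_le (mul_nonneg (lamPML_nonneg hσ₀_nonneg hR) hk) hr.1 hr.2
    (one_le_div_one_add_delPML_sq (r := r) hσ₀_nonneg hR)
    (sq_mul_one_sub_sigPML_mul_delPML_le hσ₀_sq hr.1) hν
  rw [re_pmlDensity, ← mul_assoc]
  exact add_le_add (by gcongr; exact hr.1.le) (mul_le_mul_of_nonneg_right hB hq)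

lemma integrableOn_pmlDensity {v v' : ℝ → ℂ} (hσ₀ : 0 ≤ σ₀) (hR : 0 ≤ R)
    (hv : Admissible Rh v v') :
    IntegrableOn (fun r => pmlDensity k σ₀ R ν r (‖v' r‖ ^ 2) (‖v r‖ ^ 2)) (Set.Ioc 0 Rh) := by
  obtain ⟨-, -, hv', hv_div, hv_mul⟩ := hv
  have hdiv : ∀ a b : ℂ, 1 ≤ ‖b‖ → ‖a / b‖ ≤ ‖a‖ := fun a b hb => by
    rw [norm_div]; exact div_le_self (norm_nonneg a) hb
  have hα := measurable_alphaPML σ₀ R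
  have hβ := measurable_betaPML σ₀ R
  have h₁ := hv'.ofReal.bdd_mul (hβ.div hα).aestronglyMeasurable
    (c := 1 + σ₀) (ae_of_all _ fun r =>
      (hdiv _ _ (one_le_norm_one_add_I_mul _)).trans (norm_betaPML_le hσ₀ hR))
  have h₂ := hv_div.ofReal.bdd_mul
    (measurable_const.mul (hα.div hβ)).aestronglyMeasurable (f := fun r =>
      ((ν ^ 2 : ℝ) : ℂ) * (alphaPML σ₀ R r / betaPML σ₀ R r))
    (c := ‖((ν ^ 2 : ℝ) : ℂ)‖ * (1 + σ₀)) (ae_of_all _ fun r => by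
      rw [norm_mul]
      gcongr
      exact (hdiv _ _ (one_le_norm_one_add_I_mul _)).trans (norm_alphaPML_le hσ₀))
  have h₃ := hv_mul.ofReal.bdd_mul
    ((measurable_const.mul hα).mul hβ).aestronglyMeasurable (f := fun r =>
      ((k ^ 2 : ℝ) : ℂ) * alphaPML σ₀ R r * betaPML σ₀ R r)
    (c := ‖((k ^ 2 : ℝ) : ℂ)‖ * (1 + σ₀) * (1 + σ₀)) (ae_of_all _ fun r => by
      rw [norm_mul, norm_mul]
      gcongr
      exacts [norm_alphaPML_le hσ₀, norm_betaPML_le hσ₀ hR])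
  refine ((h₁.add h₂).sub h₃).congr (ae_of_all _ fun r => ?_)
  simp only [pmlDensity, Pi.add_apply, Pi.sub_apply, Pi.div_apply,
    RCLike.ofReal_eq_complex_ofReal]
  push_cast
  ring

end Density

theorem modal_form_re_coercive_general (k σ₀ R Rh ν : ℝ) (v v' : ℝ → ℂ)
    (hk : 0 < k) (hσ₀' : Real.sqrt 3 ≤ σ₀) (hR : 0 < R)
    (hν : k ^ 2 * R ^ 2 + lamPML σ₀ R Rh * k * Rh ^ 2 ≤ ν ^ 2)
    (hv : Admissible Rh v v') :
    (∫ r in Set.Ioc 0 Rh,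
        ((1 / (1 + σ₀ ^ 2)) * r * ‖v' r‖ ^ 2 + lamPML σ₀ R Rh * k * (r * ‖v r‖ ^ 2))) ≤
      (aForm k σ₀ R Rh ν v v').re := by
  have hσ₀ : 0 ≤ σ₀ := (Real.sqrt_nonneg 3).trans hσ₀'
  have hint := integrableOn_pmlDensity (k := k) (ν := ν) hσ₀ hR.le hv
  obtain ⟨-, -, hv', -, hv_mul⟩ := hv
  have hlhs : IntegrableOn (fun r => 1 / (1 + σ₀ ^ 2) * r * ‖v' r‖ ^ 2 +
      lamPML σ₀ R Rh * k * (r * ‖v r‖ ^ 2)) (Set.Ioc 0 Rh) := by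
    refine ((hv'.const_mul (1 / (1 + σ₀ ^ 2))).add
      (hv_mul.const_mul (lamPML σ₀ R Rh * k))).congr (ae_of_all _ fun r => ?_)
    simp only [Pi.add_apply]
    ring
  rw [aForm_eq_integral_pmlDensity]
  refine le_of_le_of_eq ?_ (integral_re hint)
  exact setIntegral_mono_on hlhs hint.re measurableSet_Ioc fun r hr =>
    le_re_pmlDensity hk.le hσ₀' hR.le hν hr (sq_nonneg _) (sq_nonneg _)

/-- Lemma 3.2(i) (coercivity of the real part of the modal PML form): if `σ₀ ≥ √3` and
`ν² ≥ k²R² + λkR̂²`, then for every admissible `v`,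
`Re a_ν(v,v) ≥ ∫₀^{R̂} ((1/(1+σ₀²)) r |v′|² + λ k r |v|²) dr`. -/
theorem modal_form_re_coercive (k σ₀ R Rh ν : ℝ) (v v' : ℝ → ℂ)
    (hk : 0 < k) (hσ₀ : 0 < σ₀) (hσ₀' : Real.sqrt 3 ≤ σ₀) (hR : 0 < R) (hRRh : R < Rh)
    (hν : k ^ 2 * R ^ 2 + lamPML σ₀ R Rh * k * Rh ^ 2 ≤ ν ^ 2)
    (hv : Admissible Rh v v') :
    (∫ r in Set.Ioc 0 Rh,
        ((1 / (1 + σ₀ ^ 2)) * r * ‖v' r‖ ^ 2 + lamPML σ₀ R Rh * k * (r * ‖v r‖ ^ 2))) ≤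
      (aForm k σ₀ R Rh ν v v').re :=
  modal_form_re_coercive_general k σ₀ R Rh ν v v' hk hσ₀' hR hν hv
end
end

section
/- Monotonicity claim in the proof of Lemma 3.2(i): Assume σ₀ ≥ √3. Then for every r ∈ (0, R̂], one has ((1 + δ(r)²) / (1 + σ(r)δ(r))) · (1 − σ(r)δ(r)) · r² ≤ R²; that is, the function g(r) = ((1+δ(r)²)/(1+σ(r)δ(r)))(1−σ(r)δ(r)) k² r² attains its maximum on (0, R̂] at r = R, where g(R) = k²R². -/
/-! Inside the layer put `u = r − R > 0` and `s = σ₀²`. Since `r δ = σ₀ u`, clearing powers of `r`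
turns the left side into `(r² + s u²)(r − s u) / (r + s u)`, so the claim is a cubic inequality
in `u` whose defect is `2(s − 1)R²u + (s − 3)Ru² + (s² − 1)u³`, nonnegative because `s ≥ 3`.
Outside the layer `σ = δ = 0` and the claim is `r² ≤ R²`. -/

open MeasureTheory

noncomputable section

lemma sigPML_of_le {σ₀ R r : ℝ} (h : r ≤ R) : sigPML σ₀ R r = 0 := if_pos h

lemma delPML_of_le {σ₀ R r : ℝ} (h : r ≤ R) : delPML σ₀ R r = 0 := if_pos h

lemma sigPML_of_lt {σ₀ R r : ℝ} (h : R < r) : sigPML σ₀ R r = σ₀ := if_neg h.not_ge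

lemma delPML_of_lt {σ₀ R r : ℝ} (h : R < r) : delPML σ₀ R r = σ₀ * (r - R) / r :=
  if_neg h.not_ge

lemma cubic_le_of_three_le {s R r : ℝ} (hs : 3 ≤ s) (hR : 0 ≤ R) (hRr : R ≤ r) :
    (r ^ 2 + s * (r - R) ^ 2) * (r - s * (r - R)) ≤ R ^ 2 * (r + s * (r - R)) := by
  have defect : R ^ 2 * (r + s * (r - R)) - (r ^ 2 + s * (r - R) ^ 2) * (r - s * (r - R)) =
      2 * (s - 1) * R ^ 2 * (r - R) + (s - 3) * R * (r - R) ^ 2 + (s ^ 2 - 1) * (r - R) ^ 3 := by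
    ring
  have hs₁ : 0 ≤ s - 1 := by linarith
  have hs₃ : 0 ≤ s - 3 := by linarith
  have hs_sq : 0 ≤ s ^ 2 - 1 := by nlinarith
  rw [← sub_nonneg, defect]
  positivity

lemma pml_factor_mul_sq_le {σ₀ R r : ℝ} (hσ₀ : 3 ≤ σ₀ ^ 2) (hR : 0 ≤ R) (hRr : R < r) :
    (1 + (σ₀ * (r - R) / r) ^ 2) / (1 + σ₀ * (σ₀ * (r - R) / r)) *
        (1 - σ₀ * (σ₀ * (r - R) / r)) * r ^ 2 ≤ R ^ 2 := by
  have hr : 0 < r := hR.trans_lt hRr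
  have hden : 0 < r + σ₀ ^ 2 * (r - R) := by positivity
  have cleared : (1 + (σ₀ * (r - R) / r) ^ 2) / (1 + σ₀ * (σ₀ * (r - R) / r)) *
      (1 - σ₀ * (σ₀ * (r - R) / r)) * r ^ 2 =
      (r ^ 2 + σ₀ ^ 2 * (r - R) ^ 2) * (r - σ₀ ^ 2 * (r - R)) / (r + σ₀ ^ 2 * (r - R)) := by
    field_simp
  rw [cleared, div_le_iff₀ hden]
  exact cubic_le_of_three_le hσ₀ hR hRr.le

theorem g_max_at_R_general (k σ₀ R Rh : ℝ)
    (hσ₀' : Real.sqrt 3 ≤ σ₀) (hR : 0 < R) :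
    (∀ r ∈ Set.Ioc (0 : ℝ) Rh,
        ((1 + delPML σ₀ R r ^ 2) / (1 + sigPML σ₀ R r * delPML σ₀ R r)) *
            (1 - sigPML σ₀ R r * delPML σ₀ R r) * r ^ 2 ≤ R ^ 2) ∧
      ((1 + delPML σ₀ R R ^ 2) / (1 + sigPML σ₀ R R * delPML σ₀ R R)) *
          (1 - sigPML σ₀ R R * delPML σ₀ R R) * k ^ 2 * R ^ 2 = k ^ 2 * R ^ 2 := by
  refine ⟨fun r hr => ?_, by simp [sigPML_of_le le_rfl, delPML_of_le le_rfl]⟩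
  rcases le_or_gt r R with hrR | hRr
  · simpa [sigPML_of_le hrR, delPML_of_le hrR] using pow_le_pow_left₀ hr.1.le hrR 2
  · rw [sigPML_of_lt hRr, delPML_of_lt hRr]
    exact pml_factor_mul_sq_le (Real.sqrt_le_iff.mp hσ₀').2 hR.le hRr

/-- Monotonicity claim in the proof of Lemma 3.2(i): if `σ₀ ≥ √3`, then for every
`r ∈ (0, R̂]`, `((1+δ(r)²)/(1+σ(r)δ(r)))(1−σ(r)δ(r)) r² ≤ R²`; i.e. the function
`g(r) = ((1+δ²)/(1+σδ))(1−σδ)k²r²` attains its maximum on `(0, R̂]` at `r = R`,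
where `g(R) = k²R²`. -/
theorem g_max_at_R (k σ₀ R Rh : ℝ)
    (hk : 0 < k) (hσ₀ : 0 < σ₀) (hσ₀' : Real.sqrt 3 ≤ σ₀) (hR : 0 < R) (hRRh : R < Rh) :
    (∀ r ∈ Set.Ioc (0 : ℝ) Rh,
        ((1 + delPML σ₀ R r ^ 2) / (1 + sigPML σ₀ R r * delPML σ₀ R r)) *
            (1 - sigPML σ₀ R r * delPML σ₀ R r) * r ^ 2 ≤ R ^ 2) ∧
      ((1 + delPML σ₀ R R ^ 2) / (1 + sigPML σ₀ R R * delPML σ₀ R R)) *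
          (1 - sigPML σ₀ R R * delPML σ₀ R R) * k ^ 2 * R ^ 2 = k ^ 2 * R ^ 2 :=
  g_max_at_R_general k σ₀ R Rh hσ₀' hR

end
end
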